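/- Let $\varepsilon \geq 0$, $c_1, c_2 \geq 0$, and let $u_1, u_2$ be bounded smooth solutions on $\mathbb{T}^n \times (0,T)$, continuous up to $t=0$, of $\partial_t u - \varepsilon \Delta u - b(x,t)\cdot \nabla u = f(x,t)$ with the same source $f$ and initial data $g_1, g_2 \in C(\mathbb{T}^n)$, where $b$ is smooth on $\mathbb{T}^n \times (0,T)$ with $[\mathrm{div}(b)(x,t)]^- \leq c_1/t + c_2$ for all $(x,t)$. Then $\|u_1(\cdot,\tau) - u_2(\cdot,\tau)\|_{L^\infty(\mathbb{T}^n)} \leq \|g_1 - g_2\|_{L^\infty(\mathbb{T}^n)}$ for every $\tau \in (0,T)$; in particular if $g_1 = g_2$ then $u_1 \equiv u_2$. -/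

import Mathlib

open MeasureTheory Set
open Filter Topology

noncomputable section

/-- The unit cube, a fundamental domain for the torus `𝕋ⁿ = ℝⁿ/ℤⁿ`. -/
def cube (n : ℕ) : Set (Fin n → ℝ) := Set.univ.pi fun _ => Set.Ico (0 : ℝ) 1

/-- Partial derivative in the `i`-th coordinate direction. -/
def pd {n : ℕ} (i : Fin n) (f : (Fin n → ℝ) → ℝ) (x : Fin n → ℝ) : ℝ :=
  fderiv ℝ f x (Pi.single i 1)

/-- Laplacian as sum of second partial derivatives. -/
def lap {n : ℕ} (f : (Fin n → ℝ) → ℝ) (x : Fin n → ℝ) : ℝ :=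
  ∑ i : Fin n, pd i (pd i f) x

/-- `ℤⁿ`-periodicity, i.e. `f` is a function on the torus `𝕋ⁿ`. -/
def ZPeriodic {n : ℕ} (f : (Fin n → ℝ) → ℝ) : Prop :=
  ∀ (x : Fin n → ℝ) (k : Fin n → ℤ), f (x + fun i => (k i : ℝ)) = f x

lemma pd_diff {n : ℕ} {F : (Fin n → ℝ) → ℝ} (hF : ∀ x, ContDiffAt ℝ (⊤ : ℕ∞) F x)
    (i : Fin n) (x : Fin n → ℝ) : DifferentiableAt ℝ (pd i F) x := by
  have h1 : ContDiffAt ℝ 1 (fderiv ℝ F) x := (hF x).fderiv_right (by exact WithTop.coe_le_coe.mpr le_top)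
  have h2 : DifferentiableAt ℝ (fderiv ℝ F) x := h1.differentiableAt one_ne_zero
  exact h2.clm_apply (differentiableAt_const _)

lemma periodic_max {n : ℕ} {F : (Fin n → ℝ) → ℝ} (hF : Continuous F)
    (hp : ZPeriodic F) : ∃ x₀, ∀ x, F x ≤ F x₀ := by
  obtain ⟨x₀, -, hmax⟩ := (isCompact_Icc (a := (0 : Fin n → ℝ)) (b := 1)).exists_isMaxOn
    ⟨0, Set.mem_Icc.mpr ⟨le_rfl, fun i => zero_le_one⟩⟩ hF.continuousOn
  refine ⟨x₀, fun x => ?_⟩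
  have hx : (fun i => Int.fract (x i)) ∈ Icc (0 : Fin n → ℝ) 1 := by
    rw [Set.mem_Icc]
    exact ⟨fun i => Int.fract_nonneg _, fun i => (Int.fract_lt_one _).le⟩
  have := hp (fun i => Int.fract (x i)) (fun i => ⌊x i⌋)
  have hxe : ((fun i => Int.fract (x i)) + fun i => ((⌊x i⌋ : ℤ) : ℝ)) = x := by
    funext i
    simp only [Pi.add_apply, Int.fract]
    ring
  rw [hxe] at this
  rw [this]
  exact hmax hx

open Filter Topology


lemma second_deriv_test {n : ℕ} {F : (Fin n → ℝ) → ℝ} {x₀ : Fin n → ℝ}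
    (hF : ∀ x, ContDiffAt ℝ (⊤ : ℕ∞) F x) (hmax : ∀ x, F x ≤ F x₀) (i : Fin n) :
    pd i (pd i F) x₀ ≤ 0 := by
  by_contra hD
  push_neg at hD
  set e : Fin n → ℝ := Pi.single i 1 with he
  set G : (Fin n → ℝ) → ℝ := pd i F with hG
  set ψ : ℝ → ℝ := fun s => F (x₀ + s • e) with hψ
  have hline : ∀ s : ℝ, HasDerivAt (fun s : ℝ => x₀ + s • e) e s := by
    intro s
    have := ((hasDerivAt_id s).smul_const e).const_add x₀
    simpa using this
  have hψd : ∀ s : ℝ, HasDerivAt ψ (G (x₀ + s • e)) s := by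
    intro s
    have hf := ((hF (x₀ + s • e)).differentiableAt (by simp)).hasFDerivAt
    exact hf.comp_hasDerivAt s (hline s)
  have hχd : HasDerivAt (fun s : ℝ => G (x₀ + s • e)) (fderiv ℝ G x₀ e) 0 := by
    have h0 : x₀ + (0:ℝ) • e = x₀ := by simp
    have hf := (pd_diff hF i x₀).hasFDerivAt
    rw [← h0] at hf
    have := hf.comp_hasDerivAt 0 (hline 0)
    rw [h0] at this
    exact this
  have hG0 : G x₀ = 0 := by
    have hloc : IsLocalMax F x₀ := Filter.Eventually.of_forall hmax
    have := hloc.fderiv_eq_zero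
    simp [hG, pd, this]
  have hDpos : (0:ℝ) < fderiv ℝ G x₀ e := hD
  have hslope := hasDerivAt_iff_tendsto_slope.mp hχd
  have hev : ∀ᶠ s in 𝓝[≠] (0:ℝ), 0 < slope (fun s : ℝ => G (x₀ + s • e)) 0 s :=
    hslope.eventually (eventually_gt_nhds hDpos)
  have hle : 𝓝[>] (0:ℝ) ≤ 𝓝[≠] (0:ℝ) :=
    nhdsWithin_mono 0 (fun y hy => ne_of_gt hy)
  have hev2 : ∀ᶠ s in 𝓝[>] (0:ℝ), 0 < G (x₀ + s • e) := by
    filter_upwards [hle hev, self_mem_nhdsWithin] with s hs hs'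
    rw [slope_def_field] at hs
    have hspos : (0:ℝ) < s := hs'
    simp only [zero_smul, add_zero, hG0, sub_zero] at hs
    rcases div_pos_iff.mp hs with ⟨h, -⟩ | ⟨-, h⟩
    · exact h
    · linarith
  obtain ⟨η, hη, hsub⟩ := mem_nhdsGT_iff_exists_Ioo_subset.mp hev2
  have hηpos : (0:ℝ) < η := hη
  have hmono : StrictMonoOn ψ (Icc 0 η) := by
    apply strictMonoOn_of_deriv_pos (convex_Icc 0 η)
    · exact fun s _ => ((hψd s).differentiableAt.continuousAt).continuousWithinAt
    · intro s hs
      rw [interior_Icc] at hs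
      rw [(hψd s).deriv]
      exact hsub hs
  have h1 : ψ 0 < ψ η := hmono (left_mem_Icc.mpr hηpos.le)
    (right_mem_Icc.mpr hηpos.le) hηpos
  have h2 : ψ η ≤ ψ 0 := by
    have := hmax (x₀ + η • e)
    simpa [hψ] using this
  linarith

lemma max_principle {n : ℕ} {T ε : ℝ} (hT : 0 < T) (hε : 0 ≤ ε)
    {w : (Fin n → ℝ) → ℝ → ℝ} {b : (Fin n → ℝ) → ℝ → Fin n → ℝ}
    (hsmooth : ContDiffOn ℝ (⊤ : ℕ∞) (fun z : (Fin n → ℝ) × ℝ => w z.1 z.2)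
      (Set.univ ×ˢ Set.Ioo (0 : ℝ) T))
    (hcont : ContinuousOn (fun z : (Fin n → ℝ) × ℝ => w z.1 z.2)
      (Set.univ ×ˢ Set.Ico (0 : ℝ) T))
    (hper : ∀ t, ZPeriodic fun x => w x t)
    (hpde : ∀ x t, t ∈ Set.Ioo (0:ℝ) T → deriv (fun s => w x s) t =
      ε * lap (fun y => w y t) x + ∑ i : Fin n, b x t i * pd i (fun y => w y t) x)
    {K : ℝ} (hK : ∀ x, w x 0 ≤ K) :
    ∀ τ ∈ Set.Ioo (0:ℝ) T, ∀ x, w x τ ≤ K := by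
  intro τ hτ x
  have hopen : IsOpen (Set.univ ×ˢ Set.Ioo (0:ℝ) T) := (isOpen_univ (X := Fin n → ℝ)).prod isOpen_Ioo
  have hAt : ∀ (y : Fin n → ℝ) (t : ℝ), t ∈ Set.Ioo (0:ℝ) T →
      ContDiffAt ℝ (⊤ : ℕ∞) (fun z : (Fin n → ℝ) × ℝ => w z.1 z.2) (y, t) := by
    intro y t ht
    exact hsmooth.contDiffAt (hopen.mem_nhds (by simp [ht]))
  -- slice smoothness in x for fixed t
  have hslicex : ∀ t ∈ Set.Ioo (0:ℝ) T, ∀ y, ContDiffAt ℝ (⊤ : ℕ∞) (fun y' => w y' t) y := by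
    intro t ht y
    exact (hAt y t ht).comp y (ContDiffAt.prodMk contDiffAt_id contDiffAt_const)
  -- slice differentiability in t for fixed x
  have hslicet : ∀ (y : Fin n → ℝ), ∀ t ∈ Set.Ioo (0:ℝ) T,
      DifferentiableAt ℝ (fun s => w y s) t := by
    intro y t ht
    exact ((hAt y t ht).differentiableAt (by simp)).comp t
      (DifferentiableAt.prodMk (differentiableAt_const y) differentiableAt_id)
  -- enough to show `w x τ ≤ K + δ * τ` for every `δ > 0`
  have key : ∀ δ : ℝ, 0 < δ → w x τ ≤ K + δ * τ := by
    intro δ hδ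
    set V : ((Fin n → ℝ) × ℝ) → ℝ := fun z => w z.1 z.2 - δ * z.2 with hV
    set S : Set ((Fin n → ℝ) × ℝ) := Set.Icc 0 1 ×ˢ Set.Icc 0 τ with hS
    have hScomp : IsCompact S := (isCompact_Icc).prod isCompact_Icc
    have hSsub : S ⊆ Set.univ ×ˢ Set.Ico (0:ℝ) T := by
      rintro ⟨y, t⟩ ⟨-, ht⟩
      exact ⟨Set.mem_univ _, ht.1, lt_of_le_of_lt ht.2 hτ.2⟩
    have hVcont : ContinuousOn V S :=
      (hcont.mono hSsub).sub ((continuous_const.mul continuous_snd).continuousOn)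
    obtain ⟨⟨x₀, t₀⟩, hz₀S, hmax⟩ := hScomp.exists_isMaxOn
      ⟨(0, 0), by constructor <;> exact Set.mem_Icc.mpr (by constructor <;>
        first | exact le_rfl | exact hτ.1.le | exact zero_le_one | exact fun i => zero_le_one)⟩
      hVcont
    -- global max over all x and t ∈ [0, τ]
    have hglob : ∀ (y : Fin n → ℝ) (t : ℝ), t ∈ Set.Icc 0 τ → V (y, t) ≤ V (x₀, t₀) := by
      intro y t ht
      have hy : (fun i => Int.fract (y i)) ∈ Set.Icc (0 : Fin n → ℝ) 1 := by
        rw [Set.mem_Icc]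
        exact ⟨fun i => Int.fract_nonneg _, fun i => (Int.fract_lt_one _).le⟩
      have hp := hper t (fun i => Int.fract (y i)) (fun i => ⌊y i⌋)
      have hye : ((fun i => Int.fract (y i)) + fun i => ((⌊y i⌋ : ℤ) : ℝ)) = y := by
        funext i
        simp only [Pi.add_apply, Int.fract]
        ring
      rw [hye] at hp
      have : V (y, t) = V ((fun i => Int.fract (y i)), t) := by simp [hV, hp]
      rw [this]
      exact hmax ⟨hy, ht⟩
    have ht₀ : t₀ ∈ Set.Icc (0:ℝ) τ := hz₀S.2
    rcases eq_or_lt_of_le ht₀.1 with h0 | h0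
    · -- max at t = 0
      have := hglob x τ (Set.mem_Icc.mpr ⟨hτ.1.le, le_rfl⟩)
      simp only [hV, ← h0] at this
      have hK0 := hK x₀
      simp only [mul_zero, sub_zero] at this
      nlinarith
    · -- max at t₀ > 0 : contradiction
      exfalso
      have ht₀T : t₀ ∈ Set.Ioo (0:ℝ) T := ⟨h0, lt_of_le_of_lt ht₀.2 hτ.2⟩
      set F₀ : (Fin n → ℝ) → ℝ := fun y => w y t₀ with hF₀
      have hF₀s : ∀ y, ContDiffAt ℝ (⊤ : ℕ∞) F₀ y := hslicex t₀ ht₀T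
      have hmaxsp : ∀ y, F₀ y ≤ F₀ x₀ := by
        intro y
        have := hglob y t₀ ht₀
        simp only [hV] at this
        linarith
      have hpd0 : ∀ i : Fin n, pd i F₀ x₀ = 0 := by
        intro i
        have hloc : IsLocalMax F₀ x₀ := Filter.Eventually.of_forall hmaxsp
        simp [pd, hloc.fderiv_eq_zero]
      have hlap : lap F₀ x₀ ≤ 0 :=
        Finset.sum_nonpos fun i _ => second_deriv_test hF₀s hmaxsp i
      have hderiv_le : deriv (fun s => w x₀ s) t₀ ≤ 0 := by
        rw [hpde x₀ t₀ ht₀T]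
        have : ∑ i : Fin n, b x₀ t₀ i * pd i (fun y => w y t₀) x₀ = 0 := by
          apply Finset.sum_eq_zero
          intro i _
          rw [hpd0 i, mul_zero]
        rw [this, add_zero]
        exact mul_nonpos_of_nonneg_of_nonpos hε hlap
      -- time slope at the max point is nonneg, contradiction
      set φ : ℝ → ℝ := fun s => w x₀ s - δ * s with hφ
      have hφd : HasDerivAt φ (deriv (fun s => w x₀ s) t₀ - δ) t₀ := by
        have h1 := (hslicet x₀ t₀ ht₀T).hasDerivAt
        have h2 : HasDerivAt (fun s : ℝ => δ * s) δ t₀ := by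
          simpa using (hasDerivAt_id t₀).const_mul δ
        exact h1.sub h2
      have hslope := hasDerivAt_iff_tendsto_slope.mp hφd
      have hleL : 𝓝[<] t₀ ≤ 𝓝[≠] t₀ := nhdsWithin_mono t₀ (fun y hy => ne_of_lt hy)
      have hev : ∀ᶠ s in 𝓝[<] t₀, 0 ≤ slope φ t₀ s := by
        have hIoo : Set.Ioo 0 t₀ ∈ 𝓝[<] t₀ :=
          Ioo_mem_nhdsLT_of_mem (Set.mem_Ioc.mpr ⟨h0, le_rfl⟩)
        filter_upwards [hIoo] with s hs
        rw [slope_def_field]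
        have hφle : φ s ≤ φ t₀ := by
          have := hglob x₀ s (Set.mem_Icc.mpr ⟨hs.1.le, le_of_lt (lt_of_lt_of_le hs.2 ht₀.2)⟩)
          have h' := hglob x₀ t₀ ht₀
          simp only [hV] at this
          simpa [hφ] using this
        have hst : s - t₀ < 0 := by linarith [hs.2]
        exact div_nonneg_iff.mpr (Or.inr ⟨by linarith, hst.le⟩)
      have hge : 0 ≤ deriv (fun s => w x₀ s) t₀ - δ :=
        ge_of_tendsto (hslope.mono_left hleL) hev
      linarith
  -- conclude δ → 0
  by_contra hlt
  push_neg at hlt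
  have hδ : 0 < (w x τ - K) / (2 * τ) := by
    apply div_pos (by linarith) (by linarith [hτ.1])
  have := key _ hδ
  have hτpos := hτ.1
  have heq : (w x τ - K) / (2 * τ) * τ = (w x τ - K) / 2 := by
    field_simp
  rw [heq] at this
  linarith

lemma diff_pde {n : ℕ} {T ε : ℝ}
    {u1 u2 : (Fin n → ℝ) → ℝ → ℝ} {f : (Fin n → ℝ) → ℝ → ℝ}
    {b : (Fin n → ℝ) → ℝ → (Fin n → ℝ)}
    (hsmooth1 : ContDiffOn ℝ (⊤ : ℕ∞) (fun z : (Fin n → ℝ) × ℝ => u1 z.1 z.2)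
      (Set.univ ×ˢ Set.Ioo (0 : ℝ) T))
    (hsmooth2 : ContDiffOn ℝ (⊤ : ℕ∞) (fun z : (Fin n → ℝ) × ℝ => u2 z.1 z.2)
      (Set.univ ×ˢ Set.Ioo (0 : ℝ) T))
    (hpde1 : ∀ x t, t ∈ Set.Ioo (0 : ℝ) T →
      deriv (fun s => u1 x s) t - ε * lap (fun y => u1 y t) x
        - ∑ i : Fin n, b x t i * pd i (fun y => u1 y t) x = f x t)
    (hpde2 : ∀ x t, t ∈ Set.Ioo (0 : ℝ) T →
      deriv (fun s => u2 x s) t - ε * lap (fun y => u2 y t) x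
        - ∑ i : Fin n, b x t i * pd i (fun y => u2 y t) x = f x t) :
    ∀ x t, t ∈ Set.Ioo (0:ℝ) T →
      deriv (fun s => u1 x s - u2 x s) t =
        ε * lap (fun y => u1 y t - u2 y t) x
          + ∑ i : Fin n, b x t i * pd i (fun y => u1 y t - u2 y t) x := by
  intro x t ht
  have hopen : IsOpen (Set.univ ×ˢ Set.Ioo (0:ℝ) T) :=
    (isOpen_univ (X := Fin n → ℝ)).prod isOpen_Ioo
  have hAt1 : ∀ (y : Fin n → ℝ), ContDiffAt ℝ (⊤ : ℕ∞) (fun z : (Fin n → ℝ) × ℝ => u1 z.1 z.2) (y, t) :=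
    fun y => hsmooth1.contDiffAt (hopen.mem_nhds (by simp [ht]))
  have hAt2 : ∀ (y : Fin n → ℝ), ContDiffAt ℝ (⊤ : ℕ∞) (fun z : (Fin n → ℝ) × ℝ => u2 z.1 z.2) (y, t) :=
    fun y => hsmooth2.contDiffAt (hopen.mem_nhds (by simp [ht]))
  have hx1 : ∀ y, ContDiffAt ℝ (⊤ : ℕ∞) (fun y' => u1 y' t) y :=
    fun y => (hAt1 y).comp y (ContDiffAt.prodMk contDiffAt_id contDiffAt_const)
  have hx2 : ∀ y, ContDiffAt ℝ (⊤ : ℕ∞) (fun y' => u2 y' t) y :=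
    fun y => (hAt2 y).comp y (ContDiffAt.prodMk contDiffAt_id contDiffAt_const)
  have hd1 : DifferentiableAt ℝ (fun s => u1 x s) t :=
    ((hAt1 x).differentiableAt (by simp)).comp t
      (DifferentiableAt.prodMk (differentiableAt_const x) differentiableAt_id)
  have hd2 : DifferentiableAt ℝ (fun s => u2 x s) t :=
    ((hAt2 x).differentiableAt (by simp)).comp t
      (DifferentiableAt.prodMk (differentiableAt_const x) differentiableAt_id)
  have hderiv : deriv (fun s => u1 x s - u2 x s) t =
      deriv (fun s => u1 x s) t - deriv (fun s => u2 x s) t := deriv_sub hd1 hd2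
  have hpdsub : ∀ (i : Fin n) y, pd i (fun y' => u1 y' t - u2 y' t) y =
      pd i (fun y' => u1 y' t) y - pd i (fun y' => u2 y' t) y := by
    intro i y
    simp [pd, fderiv_fun_sub ((hx1 y).differentiableAt (by simp)) ((hx2 y).differentiableAt (by simp))]
  have hpdpd : ∀ (i : Fin n), pd i (pd i (fun y' => u1 y' t - u2 y' t)) x =
      pd i (pd i (fun y' => u1 y' t)) x - pd i (pd i (fun y' => u2 y' t)) x := by
    intro i
    have hfun : pd i (fun y' => u1 y' t - u2 y' t) =
        fun y => pd i (fun y' => u1 y' t) y - pd i (fun y' => u2 y' t) y :=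
      funext fun y => hpdsub i y
    rw [hfun]
    have hsub := fderiv_fun_sub (pd_diff hx1 i x) (pd_diff hx2 i x)
    simp only [pd] at hsub ⊢
    rw [hsub]
    simp
  have hlap : lap (fun y => u1 y t - u2 y t) x =
      lap (fun y => u1 y t) x - lap (fun y => u2 y t) x := by
    simp only [lap, hpdpd, Finset.sum_sub_distrib]
  have hsum : ∑ i : Fin n, b x t i * pd i (fun y => u1 y t - u2 y t) x =
      (∑ i : Fin n, b x t i * pd i (fun y => u1 y t) x)
        - ∑ i : Fin n, b x t i * pd i (fun y => u2 y t) x := by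
    simp only [hpdsub, mul_sub, Finset.sum_sub_distrib]
  have h1 := hpde1 x t ht
  have h2 := hpde2 x t ht
  rw [hderiv, hlap, hsum]
  linarith [h1, h2]


/-- Stability (and uniqueness) for viscous transport equations with
    `[div b]⁻ ≤ c₁/t + c₂`: the sup-norm of the difference of two solutions is
    bounded by the sup-norm of the difference of the initial data. -/
theorem stmt14 (n : ℕ) (T ε c1 c2 : ℝ) (hT : 0 < T) (hε : 0 ≤ ε)
    (hc1 : 0 ≤ c1) (hc2 : 0 ≤ c2)
    (u1 u2 : (Fin n → ℝ) → ℝ → ℝ) (g1 g2 : (Fin n → ℝ) → ℝ)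
    (f : (Fin n → ℝ) → ℝ → ℝ) (b : (Fin n → ℝ) → ℝ → (Fin n → ℝ))
    -- smoothness of the solutions in the interior and continuity up to `t = 0`
    (hsmooth1 : ContDiffOn ℝ (⊤ : ℕ∞) (fun z : (Fin n → ℝ) × ℝ => u1 z.1 z.2)
      (Set.univ ×ˢ Set.Ioo (0 : ℝ) T))
    (hsmooth2 : ContDiffOn ℝ (⊤ : ℕ∞) (fun z : (Fin n → ℝ) × ℝ => u2 z.1 z.2)
      (Set.univ ×ˢ Set.Ioo (0 : ℝ) T))
    (hcont1 : ContinuousOn (fun z : (Fin n → ℝ) × ℝ => u1 z.1 z.2)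
      (Set.univ ×ˢ Set.Ico (0 : ℝ) T))
    (hcont2 : ContinuousOn (fun z : (Fin n → ℝ) × ℝ => u2 z.1 z.2)
      (Set.univ ×ˢ Set.Ico (0 : ℝ) T))
    -- boundedness
    (hbdd : ∃ C : ℝ, ∀ x t, t ∈ Set.Ico (0 : ℝ) T → |u1 x t| ≤ C ∧ |u2 x t| ≤ C)
    -- periodicity: everything lives on the torus
    (hper1 : ∀ t, ZPeriodic fun x => u1 x t) (hper2 : ∀ t, ZPeriodic fun x => u2 x t)
    (hgper1 : ZPeriodic g1) (hgper2 : ZPeriodic g2)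
    (hbper : ∀ t (i : Fin n), ZPeriodic fun x => b x t i)
    (hgc1 : Continuous g1) (hgc2 : Continuous g2)
    -- the drift is smooth with `[div b]⁻ ≤ c₁/t + c₂`
    (hbsmooth : ContDiffOn ℝ (⊤ : ℕ∞) (fun z : (Fin n → ℝ) × ℝ => b z.1 z.2)
      (Set.univ ×ˢ Set.Ioo (0 : ℝ) T))
    (hdiv : ∀ x t, t ∈ Set.Ioo (0 : ℝ) T →
      max (-(∑ i : Fin n, pd i (fun y => b y t i) x)) 0 ≤ c1 / t + c2)
    -- both solve the viscous transport equation with source `f`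
    (hpde1 : ∀ x t, t ∈ Set.Ioo (0 : ℝ) T →
      deriv (fun s => u1 x s) t - ε * lap (fun y => u1 y t) x
        - ∑ i : Fin n, b x t i * pd i (fun y => u1 y t) x = f x t)
    (hpde2 : ∀ x t, t ∈ Set.Ioo (0 : ℝ) T →
      deriv (fun s => u2 x s) t - ε * lap (fun y => u2 y t) x
        - ∑ i : Fin n, b x t i * pd i (fun y => u2 y t) x = f x t)
    -- initial conditions
    (hinit1 : ∀ x, u1 x 0 = g1 x) (hinit2 : ∀ x, u2 x 0 = g2 x) :
    (∀ τ ∈ Set.Ioo (0 : ℝ) T, ∀ x, |u1 x τ - u2 x τ| ≤ ⨆ y, |g1 y - g2 y|) ∧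
    (g1 = g2 → ∀ x, ∀ t ∈ Set.Ioo (0 : ℝ) T, u1 x t = u2 x t) := by
  -- the sup of the initial difference
  set K : ℝ := ⨆ y, |g1 y - g2 y| with hKdef
  have hGper : ZPeriodic fun y => |g1 y - g2 y| := by
    intro y k
    simp only [hgper1 y k, hgper2 y k]
  obtain ⟨y₀, hy₀⟩ := periodic_max ((hgc1.sub hgc2).abs) hGper
  have hbddK : BddAbove (Set.range fun y => |g1 y - g2 y|) := by
    refine ⟨|g1 y₀ - g2 y₀|, ?_⟩
    rintro _ ⟨y, rfl⟩
    exact hy₀ y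
  have hKx : ∀ y, |g1 y - g2 y| ≤ K := fun y => le_ciSup hbddK y
  -- first difference
  have hperw : ∀ t, ZPeriodic fun x => u1 x t - u2 x t := by
    intro t y k
    simp only [hper1 t y k, hper2 t y k]
  have hperw' : ∀ t, ZPeriodic fun x => u2 x t - u1 x t := by
    intro t y k
    simp only [hper1 t y k, hper2 t y k]
  have hmp1 : ∀ τ ∈ Set.Ioo (0:ℝ) T, ∀ x, u1 x τ - u2 x τ ≤ K := by
    apply max_principle hT hε (hsmooth1.sub hsmooth2) (hcont1.sub hcont2) hperw
      (diff_pde hsmooth1 hsmooth2 hpde1 hpde2)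
    intro y
    rw [hinit1 y, hinit2 y]
    exact le_trans (le_abs_self _) (hKx y)
  have hmp2 : ∀ τ ∈ Set.Ioo (0:ℝ) T, ∀ x, u2 x τ - u1 x τ ≤ K := by
    apply max_principle hT hε (hsmooth2.sub hsmooth1) (hcont2.sub hcont1) hperw'
      (diff_pde hsmooth2 hsmooth1 hpde2 hpde1)
    intro y
    rw [hinit1 y, hinit2 y]
    exact le_trans (by rw [abs_sub_comm]; exact le_abs_self _) (hKx y)
  have main : ∀ τ ∈ Set.Ioo (0:ℝ) T, ∀ x, |u1 x τ - u2 x τ| ≤ K := by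
    intro τ hτ x
    exact abs_sub_le_iff.mpr ⟨hmp1 τ hτ x, hmp2 τ hτ x⟩
  refine ⟨main, ?_⟩
  intro hg x t ht
  have hK0 : K = 0 := by
    rw [hKdef, hg]
    simp
  have := main t ht x
  rw [hK0] at this
  have := abs_nonpos_iff.mp this
  linarith [sub_eq_zero.mp this]
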